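/- arXiv:2505.22784 — 4 statements merged into one kernel-verified Lean document; each statement's English description precedes it below -/
import Mathlib

section
/- Let U : ℝ → ℝ be concave and strictly increasing, let Y be an integrable real random variable, let x ∈ ℝ and y ≥ 0, and let 0 < Δ₁ < Δ₂. Suppose p₁, p₂ ∈ ℝ satisfy the indifference conditions E[U(x + y·Y + Δ₁·(Y − p₁))] = E[U(x + y·Y)] and E[U(x + y·Y + Δ₂·(Y − p₂))] = E[U(x + y·Y)] (with all compositions integrable). Then p₂ ≤ p₁; moreover, if U is strictly concave and Y is not almost surely equal to E[Y], then p₂ < p₁. -/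
open MeasureTheory

/-- Lemma 8: If `p₁, p₂` are the LP's indifference buy prices for quantities
`0 < Δ₁ < Δ₂` of the yield token, then `p₂ ≤ p₁`; and if moreover `U` is strictly concave and
`Y` is not a.s. equal to its mean, then `p₂ < p₁`. -/
theorem lp_buy_price_decreasing_in_quantity
    {Ω : Type*} [MeasurableSpace Ω] (ℙ : Measure Ω) [IsProbabilityMeasure ℙ]
    (U : ℝ → ℝ) (hconc : ConcaveOn ℝ Set.univ U) (hmono : StrictMono U)
    (Y : Ω → ℝ) (hY : Integrable Y ℙ)
    (x y : ℝ) (hy : 0 ≤ y)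
    (Δ₁ Δ₂ : ℝ) (hΔ₁ : 0 < Δ₁) (hΔ : Δ₁ < Δ₂) (p₁ p₂ : ℝ)
    (hint0 : Integrable (fun ω => U (x + y * Y ω)) ℙ)
    (hint1 : Integrable (fun ω => U (x + y * Y ω + Δ₁ * (Y ω - p₁))) ℙ)
    (hint2 : Integrable (fun ω => U (x + y * Y ω + Δ₂ * (Y ω - p₂))) ℙ)
    (heq1 : ∫ ω, U (x + y * Y ω + Δ₁ * (Y ω - p₁)) ∂ℙ = ∫ ω, U (x + y * Y ω) ∂ℙ)
    (heq2 : ∫ ω, U (x + y * Y ω + Δ₂ * (Y ω - p₂)) ∂ℙ = ∫ ω, U (x + y * Y ω) ∂ℙ) :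
    p₂ ≤ p₁ ∧
    (StrictConcaveOn ℝ Set.univ U → ¬ (∀ᵐ ω ∂ℙ, Y ω = ∫ ω', Y ω' ∂ℙ) → p₂ < p₁) := by
  have hΔ₂ : 0 < Δ₂ := hΔ₁.trans hΔ
  set t : ℝ := Δ₁ / Δ₂ with htdef
  have ht0 : 0 < t := div_pos hΔ₁ hΔ₂
  have ht1 : t < 1 := (div_lt_one hΔ₂).2 hΔ
  have ht2 : t * Δ₂ = Δ₁ := div_mul_cancel₀ _ hΔ₂.ne'
  have hmid : ∀ (p : ℝ) (ω : Ω),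
      t • (x + y * Y ω + Δ₂ * (Y ω - p)) + (1 - t) • (x + y * Y ω)
        = x + y * Y ω + Δ₁ * (Y ω - p) := by
    intro p ω
    simp only [smul_eq_mul]
    linear_combination (Y ω - p) * ht2
  have key : ∀ (p : ℝ) (ω : Ω),
      t * U (x + y * Y ω + Δ₂ * (Y ω - p)) + (1 - t) * U (x + y * Y ω)
        ≤ U (x + y * Y ω + Δ₁ * (Y ω - p)) := by
    intro p ω
    have h := hconc.2 (Set.mem_univ (x + y * Y ω + Δ₂ * (Y ω - p)))
      (Set.mem_univ (x + y * Y ω)) ht0.le (by linarith : (0:ℝ) ≤ 1 - t)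
      (by ring : t + (1 - t) = 1)
    rw [hmid p ω] at h
    simpa [smul_eq_mul] using h
  -- the integral of the "gap" function is zero
  have hgap : ∀ q : ℝ,
      Integrable (fun ω => U (x + y * Y ω + Δ₂ * (Y ω - q))) ℙ →
      (∫ ω, U (x + y * Y ω + Δ₂ * (Y ω - q)) ∂ℙ = ∫ ω, U (x + y * Y ω) ∂ℙ) →
      (∫ ω, (U (x + y * Y ω + Δ₁ * (Y ω - p₁)) -
        (t * U (x + y * Y ω + Δ₂ * (Y ω - q)) + (1 - t) * U (x + y * Y ω))) ∂ℙ) = 0 := by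
    intro q hintq heqq
    have hA : Integrable (fun ω => t * U (x + y * Y ω + Δ₂ * (Y ω - q))) ℙ :=
      hintq.const_mul t
    have hB : Integrable (fun ω => (1 - t) * U (x + y * Y ω)) ℙ :=
      hint0.const_mul (1 - t)
    have hsum : Integrable
        (fun ω => t * U (x + y * Y ω + Δ₂ * (Y ω - q)) + (1 - t) * U (x + y * Y ω)) ℙ :=
      hA.add hB
    rw [integral_sub hint1 hsum, integral_add hA hB,
      integral_const_mul, integral_const_mul, heq1, heqq]
    ring
  have hweak : p₂ ≤ p₁ := by
    by_contra hlt
    push_neg at hlt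
    -- pointwise the gap (with q = p₂) is strictly positive
    have hpos : ∀ ω, 0 < U (x + y * Y ω + Δ₁ * (Y ω - p₁)) -
        (t * U (x + y * Y ω + Δ₂ * (Y ω - p₂)) + (1 - t) * U (x + y * Y ω)) := by
      intro ω
      have h1 := key p₂ ω
      have h2 : U (x + y * Y ω + Δ₁ * (Y ω - p₂)) <
          U (x + y * Y ω + Δ₁ * (Y ω - p₁)) := by
        apply hmono
        nlinarith
      linarith
    have hint : Integrable (fun ω => U (x + y * Y ω + Δ₁ * (Y ω - p₁)) -
        (t * U (x + y * Y ω + Δ₂ * (Y ω - p₂)) + (1 - t) * U (x + y * Y ω))) ℙ :=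
      hint1.sub ((hint2.const_mul t).add (hint0.const_mul (1 - t)))
    have hz := hgap p₂ hint2 heq2
    have hae : (fun ω => U (x + y * Y ω + Δ₁ * (Y ω - p₁)) -
        (t * U (x + y * Y ω + Δ₂ * (Y ω - p₂)) + (1 - t) * U (x + y * Y ω)))
        =ᵐ[ℙ] 0 :=
      (integral_eq_zero_iff_of_nonneg_ae (Filter.Eventually.of_forall fun ω => (hpos ω).le)
        hint).1 hz
    obtain ⟨ω, hω⟩ := hae.exists
    have := hpos ω
    simp only [Pi.zero_apply] at hω
    linarith
  refine ⟨hweak, fun hsc hne => ?_⟩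
  by_contra hlt
  push_neg at hlt
  have hpe : p₂ = p₁ := le_antisymm hweak hlt
  subst hpe
  have hpos : ∀ ω, 0 ≤ U (x + y * Y ω + Δ₁ * (Y ω - p₂)) -
      (t * U (x + y * Y ω + Δ₂ * (Y ω - p₂)) + (1 - t) * U (x + y * Y ω)) := by
    intro ω; have := key p₂ ω; linarith
  have hint : Integrable (fun ω => U (x + y * Y ω + Δ₁ * (Y ω - p₂)) -
      (t * U (x + y * Y ω + Δ₂ * (Y ω - p₂)) + (1 - t) * U (x + y * Y ω))) ℙ :=
    hint1.sub ((hint2.const_mul t).add (hint0.const_mul (1 - t)))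
  have hz := hgap p₂ hint2 heq2
  have hae : (fun ω => U (x + y * Y ω + Δ₁ * (Y ω - p₂)) -
      (t * U (x + y * Y ω + Δ₂ * (Y ω - p₂)) + (1 - t) * U (x + y * Y ω)))
      =ᵐ[ℙ] 0 :=
    (integral_eq_zero_iff_of_nonneg_ae (Filter.Eventually.of_forall hpos) hint).1 hz
  have hYp : ∀ᵐ ω ∂ℙ, Y ω = p₂ := by
    filter_upwards [hae] with ω hω
    simp only [Pi.zero_apply] at hω
    by_contra hne'
    have hAB : x + y * Y ω + Δ₂ * (Y ω - p₂) ≠ x + y * Y ω := by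
      intro h
      apply hne'
      have : Δ₂ * (Y ω - p₂) = 0 := by linarith
      rcases mul_eq_zero.1 this with h' | h'
      · exact absurd h' hΔ₂.ne'
      · linarith
    have := hsc.2 (Set.mem_univ (x + y * Y ω + Δ₂ * (Y ω - p₂)))
      (Set.mem_univ (x + y * Y ω)) hAB ht0 (by linarith : (0:ℝ) < 1 - t)
      (by ring : t + (1 - t) = 1)
    rw [hmid p₂ ω] at this
    simp only [smul_eq_mul] at this
    linarith
  apply hne
  have hmean : ∫ ω', Y ω' ∂ℙ = p₂ := by
    rw [integral_congr_ae hYp]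
    simp
  filter_upwards [hYp] with ω hω
  rw [hmean, hω]
end

section
/- Let U : ℝ → ℝ be concave and strictly increasing, let Y be an integrable real random variable, let x ∈ ℝ and y ≥ 0, and let 0 < Δ₁ < Δ₂ ≤ y. Suppose p₁, p₂ ∈ ℝ satisfy the indifference conditions E[U(x + y·Y + Δ₁·(p₁ − Y))] = E[U(x + y·Y)] and E[U(x + y·Y + Δ₂·(p₂ − Y))] = E[U(x + y·Y)] (with all compositions integrable). Then p₁ ≤ p₂; moreover, if U is strictly concave and Y is not almost surely equal to E[Y], then p₁ < p₂. -/
open MeasureTheory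

/-- Lemma 9: If `p₁, p₂` are the LP's indifference sell prices for quantities
`0 < Δ₁ < Δ₂ ≤ y` of the yield token, then `p₁ ≤ p₂`; and if moreover `U` is strictly concave
and `Y` is not a.s. equal to its mean, then `p₁ < p₂`. -/
theorem lp_sell_price_increasing_in_quantity
    {Ω : Type*} [MeasurableSpace Ω] (ℙ : Measure Ω) [IsProbabilityMeasure ℙ]
    (U : ℝ → ℝ) (hconc : ConcaveOn ℝ Set.univ U) (hmono : StrictMono U)
    (Y : Ω → ℝ) (hY : Integrable Y ℙ)
    (x y : ℝ) (hy : 0 ≤ y)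
    (Δ₁ Δ₂ : ℝ) (hΔ₁ : 0 < Δ₁) (hΔ : Δ₁ < Δ₂) (hΔ₂ : Δ₂ ≤ y) (p₁ p₂ : ℝ)
    (hint0 : Integrable (fun ω => U (x + y * Y ω)) ℙ)
    (hint1 : Integrable (fun ω => U (x + y * Y ω + Δ₁ * (p₁ - Y ω))) ℙ)
    (hint2 : Integrable (fun ω => U (x + y * Y ω + Δ₂ * (p₂ - Y ω))) ℙ)
    (heq1 : ∫ ω, U (x + y * Y ω + Δ₁ * (p₁ - Y ω)) ∂ℙ = ∫ ω, U (x + y * Y ω) ∂ℙ)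
    (heq2 : ∫ ω, U (x + y * Y ω + Δ₂ * (p₂ - Y ω)) ∂ℙ = ∫ ω, U (x + y * Y ω) ∂ℙ) :
    p₁ ≤ p₂ ∧
    (StrictConcaveOn ℝ Set.univ U → ¬ (∀ᵐ ω ∂ℙ, Y ω = ∫ ω', Y ω' ∂ℙ) → p₁ < p₂) := by
  have hΔ₂pos : 0 < Δ₂ := hΔ₁.trans hΔ
  set l : ℝ := Δ₁ / Δ₂ with hl
  have hl0 : 0 < l := div_pos hΔ₁ hΔ₂pos
  have hl1 : l < 1 := (div_lt_one hΔ₂pos).2 hΔ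
  have hlsum : l + (1 - l) = 1 := by ring
  -- pointwise affine identity, for any price p and any ω
  have key : ∀ (p : ℝ) (ω : Ω),
      x + y * Y ω + Δ₁ * (p - Y ω)
        = l * (x + y * Y ω + Δ₂ * (p - Y ω)) + (1 - l) * (x + y * Y ω) := by
    intro p ω
    rw [hl]
    field_simp
    ring
  -- measurability of the relevant composed function
  have hmeas : ∀ p : ℝ, AEStronglyMeasurable
      (fun ω => U (x + y * Y ω + Δ₁ * (p - Y ω))) ℙ := by
    intro p
    have hUm : Measurable U := hmono.monotone.measurable
    have : AEMeasurable (fun ω => x + y * Y ω + Δ₁ * (p - Y ω)) ℙ :=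
      ((aemeasurable_const.add (hY.aemeasurable.const_mul y)).add
        ((aemeasurable_const.sub hY.aemeasurable).const_mul Δ₁))
    exact (hUm.comp_aemeasurable this).aestronglyMeasurable
  -- the convex-combination lower bound at price p₂
  set g : Ω → ℝ := fun ω =>
      l * U (x + y * Y ω + Δ₂ * (p₂ - Y ω)) + (1 - l) * U (x + y * Y ω) with hg
  have hgint : Integrable g ℙ := (hint2.const_mul l).add (hint0.const_mul (1 - l))
  have hglb : ∀ ω, g ω ≤ U (x + y * Y ω + Δ₁ * (p₂ - Y ω)) := by
    intro ω
    have := hconc.2 (Set.mem_univ (x + y * Y ω + Δ₂ * (p₂ - Y ω)))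
      (Set.mem_univ (x + y * Y ω)) hl0.le (by linarith : (0:ℝ) ≤ 1 - l) hlsum
    simpa [key p₂ ω, smul_eq_mul] using this
  have hgint0 : ∫ ω, g ω ∂ℙ = ∫ ω, U (x + y * Y ω) ∂ℙ := by
    rw [hg]
    rw [integral_add (hint2.const_mul l) (hint0.const_mul (1 - l)),
      integral_const_mul, integral_const_mul, heq2]
    ring
  -- Part 1 : p₁ ≤ p₂
  have hle : p₁ ≤ p₂ := by
    by_contra hcon
    push_neg at hcon  -- p₂ < p₁
    set f : Ω → ℝ := fun ω => U (x + y * Y ω + Δ₁ * (p₂ - Y ω)) with hf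
    have hflt : ∀ ω, f ω < U (x + y * Y ω + Δ₁ * (p₁ - Y ω)) := by
      intro ω
      apply hmono
      have : Δ₁ * (p₂ - Y ω) < Δ₁ * (p₁ - Y ω) :=
        mul_lt_mul_of_pos_left (by linarith) hΔ₁
      linarith
    have hfint : Integrable f ℙ := by
      have h1 : Integrable (fun ω => f ω - g ω) ℙ := by
        refine Integrable.mono (hint1.sub hgint) ((hmeas p₂).sub hgint.1)
          (Filter.Eventually.of_forall fun ω => ?_)
        have h2 : 0 ≤ f ω - g ω := by have := hglb ω; simp only [hf]; linarith
        have h3 : f ω - g ω ≤ U (x + y * Y ω + Δ₁ * (p₁ - Y ω)) - g ω := by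
          have := hflt ω; linarith
        have h4 : 0 ≤ U (x + y * Y ω + Δ₁ * (p₁ - Y ω)) - g ω := le_trans h2 h3
        simp only [Pi.sub_apply, Real.norm_eq_abs, abs_of_nonneg h2, abs_of_nonneg h4]
        exact h3
      have hfeq : f = (fun ω => f ω - g ω) + g := by ext ω; simp
      rw [hfeq]
      exact h1.add hgint
    have hlow : ∫ ω, U (x + y * Y ω) ∂ℙ ≤ ∫ ω, f ω ∂ℙ := by
      rw [← hgint0]
      exact integral_mono hgint hfint hglb
    have hup : ∫ ω, f ω ∂ℙ ≤ ∫ ω, U (x + y * Y ω) ∂ℙ := by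
      rw [← heq1]
      exact integral_mono hfint hint1 fun ω => (hflt ω).le
    have heqf : ∫ ω, f ω ∂ℙ = ∫ ω, U (x + y * Y ω + Δ₁ * (p₁ - Y ω)) ∂ℙ := by
      rw [heq1]; exact le_antisymm hup hlow
    have hae : f =ᵐ[ℙ] fun ω => U (x + y * Y ω + Δ₁ * (p₁ - Y ω)) :=
      (integral_eq_iff_of_ae_le hfint hint1
        (Filter.Eventually.of_forall fun ω => (hflt ω).le)).1 heqf
    haveI : (ae ℙ).NeBot := ae_neBot.2 (IsProbabilityMeasure.ne_zero ℙ)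
    obtain ⟨ω, hω⟩ := hae.exists
    exact absurd hω (ne_of_lt (hflt ω))
  refine ⟨hle, fun hsconc hne => ?_⟩
  -- Part 2 : strict
  by_contra hcon
  push_neg at hcon  -- p₂ ≤ p₁, so p₁ = p₂
  have hpe : p₁ = p₂ := le_antisymm hle hcon
  subst hpe
  -- now f₁ ≥ g pointwise with equal integrals
  have hglb1 : ∀ ω, g ω ≤ U (x + y * Y ω + Δ₁ * (p₁ - Y ω)) := hglb
  have heqI : ∫ ω, g ω ∂ℙ = ∫ ω, U (x + y * Y ω + Δ₁ * (p₁ - Y ω)) ∂ℙ := by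
    rw [hgint0, heq1]
  have hae : g =ᵐ[ℙ] fun ω => U (x + y * Y ω + Δ₁ * (p₁ - Y ω)) :=
    (integral_eq_iff_of_ae_le hgint hint1
      (Filter.Eventually.of_forall hglb1)).1 heqI
  -- strict concavity forces Y ω = p₁ a.e.
  have hYae : ∀ᵐ ω ∂ℙ, Y ω = p₁ := by
    filter_upwards [hae] with ω hω
    by_contra hne'
    have hdiff : x + y * Y ω + Δ₂ * (p₁ - Y ω) ≠ x + y * Y ω := by
      intro h
      have : Δ₂ * (p₁ - Y ω) = 0 := by linarith
      rcases mul_eq_zero.1 this with h | h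
      · exact hΔ₂pos.ne' h
      · exact hne' (by linarith)
    have hstrict := hsconc.2 (Set.mem_univ (x + y * Y ω + Δ₂ * (p₁ - Y ω)))
      (Set.mem_univ (x + y * Y ω)) hdiff hl0 (by linarith : (0:ℝ) < 1 - l) hlsum
    rw [smul_eq_mul, smul_eq_mul, smul_eq_mul, smul_eq_mul, ← key p₁ ω] at hstrict
    have : g ω < U (x + y * Y ω + Δ₁ * (p₁ - Y ω)) := hstrict
    rw [hω] at this
    exact lt_irrefl _ this
  -- hence Y is a.s. equal to its mean, contradiction
  apply hne
  have hmean : ∫ ω', Y ω' ∂ℙ = p₁ := by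
    rw [integral_congr_ae (hYae.mono fun ω h => h)]
    simp
  filter_upwards [hYae] with ω h
  rw [hmean, h]
end

section
/- Let U_P : ℝ → ℝ be concave, strictly increasing and continuous with U_P(w) → −∞ as w → −∞, and let Y be a bounded, almost surely nonnegative random variable. Fix x₀ ∈ ℝ and y₀ ≥ 0. Then for every Δ > 0 there exists a unique price p^S(Δ) ≥ 0 satisfying the indifference condition E[U_P(x₀ + y₀·Y + Δ·(Y − p^S(Δ)))] = E[U_P(x₀ + y₀·Y)]; moreover the map Δ ↦ p^S(Δ) is antitone on (0, ∞). Consequently, along the sell branch ψ_S = {(x₀ − Δ·p^S(Δ), y₀ + Δ) : Δ ≥ 0} of the bonding curve, the liquidity provider's expected utility over terminal wealth equals its initial value E[U_P(x₀ + y₀·Y)] at every point. -/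
open MeasureTheory


section BC
variable {Ω : Type*} [MeasurableSpace Ω] (ℙ : Measure Ω) [IsProbabilityMeasure ℙ]
  (UP : ℝ → ℝ) (hcont : Continuous UP)
  (Y : Ω → ℝ) (hmeas : Measurable Y) (C : ℝ) (hbdd : ∀ ω, |Y ω| ≤ C)

include hcont hmeas hbdd in
lemma bc_integrable (a b : ℝ) : Integrable (fun ω => UP (a + b * Y ω)) ℙ := by
  obtain ⟨M, hM⟩ := (isCompact_Icc (a := -(|a| + |b| * C)) (b := |a| + |b| * C)).exists_bound_of_continuousOn hcont.continuousOn
  refine Integrable.mono' (integrable_const M)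
    ((hcont.measurable.comp ((measurable_const.add (measurable_const.mul hmeas)))).aestronglyMeasurable)
    (Filter.Eventually.of_forall fun ω => ?_)
  refine hM _ ?_
  have h1 : |Y ω| ≤ C := hbdd ω
  have h2 : |a + b * Y ω| ≤ |a| + |b| * C := by
    calc |a + b * Y ω| ≤ |a| + |b * Y ω| := abs_add_le _ _
    _ = |a| + |b| * |Y ω| := by rw [abs_mul]
    _ ≤ |a| + |b| * C := by nlinarith [abs_nonneg b]
  exact Set.mem_Icc.mpr (abs_le.mp h2)

include hcont hmeas hbdd in
lemma bc_strict (hmono : StrictMono UP) {a₁ a₂ : ℝ} (b : ℝ) (h : a₁ < a₂) :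
    ∫ ω, UP (a₁ + b * Y ω) ∂ℙ < ∫ ω, UP (a₂ + b * Y ω) ∂ℙ := by
  have hi1 := bc_integrable ℙ UP hcont Y hmeas C hbdd a₁ b
  have hi2 := bc_integrable ℙ UP hcont Y hmeas C hbdd a₂ b
  have hpos : ∀ ω, 0 < UP (a₂ + b * Y ω) - UP (a₁ + b * Y ω) := fun ω =>
    sub_pos.mpr (hmono (by linarith))
  have h0 : 0 < ∫ ω, (UP (a₂ + b * Y ω) - UP (a₁ + b * Y ω)) ∂ℙ := by
    rw [integral_pos_iff_support_of_nonneg (fun ω => (hpos ω).le) (hi2.sub hi1)]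
    have : Function.support (fun ω => UP (a₂ + b * Y ω) - UP (a₁ + b * Y ω)) = Set.univ := by
      ext ω; simp [Function.mem_support, (hpos ω).ne']
    rw [this]; simp
  rw [integral_sub hi2 hi1] at h0; linarith

include hcont hmeas hbdd in
lemma bc_concave (hconc : ConcaveOn ℝ Set.univ UP) (a₁ b₁ a₂ b₂ : ℝ) :
    ConcaveOn ℝ Set.univ (fun t => ∫ ω, UP ((a₁ + t * a₂) + (b₁ + t * b₂) * Y ω) ∂ℙ) := by
  refine ⟨convex_univ, fun p _ q _ α β hα hβ hαβ => ?_⟩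
  have key : ∀ ω, α * UP ((a₁ + p * a₂) + (b₁ + p * b₂) * Y ω)
      + β * UP ((a₁ + q * a₂) + (b₁ + q * b₂) * Y ω)
      ≤ UP ((a₁ + (α • p + β • q) * a₂) + (b₁ + (α • p + β • q) * b₂) * Y ω) := by
    intro ω
    have := hconc.2 (Set.mem_univ ((a₁ + p * a₂) + (b₁ + p * b₂) * Y ω))
      (Set.mem_univ ((a₁ + q * a₂) + (b₁ + q * b₂) * Y ω)) hα hβ hαβ
    simp only [smul_eq_mul] at this ⊢
    have harg : α * ((a₁ + p * a₂) + (b₁ + p * b₂) * Y ω)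
        + β * ((a₁ + q * a₂) + (b₁ + q * b₂) * Y ω)
        = (a₁ + (α * p + β * q) * a₂) + (b₁ + (α * p + β * q) * b₂) * Y ω := by
      have hβ' : β = 1 - α := by linarith [hαβ]
      subst hβ'; ring
    rw [harg] at this; exact this
  have hip := bc_integrable ℙ UP hcont Y hmeas C hbdd (a₁ + p * a₂) (b₁ + p * b₂)
  have hiq := bc_integrable ℙ UP hcont Y hmeas C hbdd (a₁ + q * a₂) (b₁ + q * b₂)
  calc α • ∫ ω, UP ((a₁ + p * a₂) + (b₁ + p * b₂) * Y ω) ∂ℙ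
      + β • ∫ ω, UP ((a₁ + q * a₂) + (b₁ + q * b₂) * Y ω) ∂ℙ
      = ∫ ω, (α * UP ((a₁ + p * a₂) + (b₁ + p * b₂) * Y ω)
        + β * UP ((a₁ + q * a₂) + (b₁ + q * b₂) * Y ω)) ∂ℙ := by
        rw [integral_add (hip.const_mul α) (hiq.const_mul β),
          integral_const_mul, integral_const_mul]; simp [smul_eq_mul]
    _ ≤ _ := integral_mono ((hip.const_mul α).add (hiq.const_mul β))
        (bc_integrable ℙ UP hcont Y hmeas C hbdd _ _) key
end BC

/-- sell branch of the optimally efficient bonding curve, Theorem 10: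
for every trade size `Δ > 0` there is a unique nonnegative indifference price `p^S(Δ)`,
the map `Δ ↦ p^S(Δ)` is antitone on `(0,∞)`, and along the sell branch
`ψ_S = {(x₀ − Δ·p^S(Δ), y₀ + Δ) : Δ ≥ 0}` the LP's expected utility over terminal wealth
equals its initial value at every point. -/
theorem optimally_efficient_bonding_curve_sell_branch
    {Ω : Type*} [MeasurableSpace Ω] (ℙ : Measure Ω) [IsProbabilityMeasure ℙ]
    (UP : ℝ → ℝ) (hconc : ConcaveOn ℝ Set.univ UP) (hmono : StrictMono UP)
    (hcont : Continuous UP) (hlim : Filter.Tendsto UP Filter.atBot Filter.atBot)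
    (Y : Ω → ℝ) (hmeas : Measurable Y) (C : ℝ) (hbdd : ∀ ω, |Y ω| ≤ C)
    (hpos : ∀ᵐ ω ∂ℙ, 0 ≤ Y ω)
    (x₀ y₀ : ℝ) (hy₀ : 0 ≤ y₀) :
    ∃ pS : ℝ → ℝ,
      (∀ Δ : ℝ, 0 < Δ → 0 ≤ pS Δ ∧
        ∫ ω, UP (x₀ + y₀ * Y ω + Δ * (Y ω - pS Δ)) ∂ℙ =
          ∫ ω, UP (x₀ + y₀ * Y ω) ∂ℙ) ∧
      (∀ Δ : ℝ, 0 < Δ → ∀ q : ℝ, 0 ≤ q →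
        (∫ ω, UP (x₀ + y₀ * Y ω + Δ * (Y ω - q)) ∂ℙ =
          ∫ ω, UP (x₀ + y₀ * Y ω) ∂ℙ) → q = pS Δ) ∧
      AntitoneOn pS (Set.Ioi (0 : ℝ)) ∧
      (∀ Δ : ℝ, 0 ≤ Δ →
        ∫ ω, UP ((x₀ - Δ * pS Δ) + (y₀ + Δ) * Y ω) ∂ℙ =
          ∫ ω, UP (x₀ + y₀ * Y ω) ∂ℙ) := by
  classical
  have hInt : ∀ a b : ℝ, Integrable (fun ω => UP (a + b * Y ω)) ℙ :=
    bc_integrable ℙ UP hcont Y hmeas C hbdd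
  have hStrict : ∀ {a₁ a₂ : ℝ} (b : ℝ), a₁ < a₂ →
      ∫ ω, UP (a₁ + b * Y ω) ∂ℙ < ∫ ω, UP (a₂ + b * Y ω) ∂ℙ :=
    fun {a₁ a₂} b h => bc_strict ℙ UP hcont Y hmeas C hbdd hmono b h
  set F₀ : ℝ := ∫ ω, UP (x₀ + y₀ * Y ω) ∂ℙ with hF₀def
  set G : ℝ → ℝ → ℝ := fun a b => ∫ ω, UP (a + b * Y ω) ∂ℙ with hGdef
  have hGF₀ : G x₀ y₀ = F₀ := rfl
  -- rewriting the trade-form integral into G-form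
  have hG : ∀ Δ p : ℝ, ∫ ω, UP (x₀ + y₀ * Y ω + Δ * (Y ω - p)) ∂ℙ
      = G (x₀ - Δ * p) (y₀ + Δ) := by
    intro Δ p
    have : (fun ω => UP (x₀ + y₀ * Y ω + Δ * (Y ω - p)))
        = fun ω => UP ((x₀ - Δ * p) + (y₀ + Δ) * Y ω) := by
      funext ω; congr 1; ring
    rw [this]
  -- strict antitonicity in p for fixed Δ > 0
  have hanti : ∀ Δ : ℝ, 0 < Δ → StrictAnti (fun p => G (x₀ - Δ * p) (y₀ + Δ)) := by
    intro Δ hΔ p₁ p₂ h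
    exact hStrict (y₀ + Δ) (by nlinarith)
  -- value at p = 0 is at least F₀
  have hφ0 : ∀ Δ : ℝ, 0 ≤ Δ → F₀ ≤ G x₀ (y₀ + Δ) := by
    intro Δ hΔ
    refine integral_mono_ae (hInt x₀ y₀) (hInt x₀ (y₀ + Δ)) ?_
    filter_upwards [hpos] with ω hω
    exact hmono.monotone (by nlinarith)
  -- continuity in p
  have hcontp : ∀ Δ : ℝ, Continuous (fun p => G (x₀ - Δ * p) (y₀ + Δ)) := by
    intro Δ
    have hc := bc_concave ℙ UP hcont Y hmeas C hbdd hconc x₀ (y₀ + Δ) (-Δ) 0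
    have he : (fun t => ∫ ω, UP ((x₀ + t * (-Δ)) + ((y₀ + Δ) + t * 0) * Y ω) ∂ℙ)
        = fun p => G (x₀ - Δ * p) (y₀ + Δ) := by
      funext t
      have : (fun ω => UP ((x₀ + t * (-Δ)) + ((y₀ + Δ) + t * 0) * Y ω))
          = fun ω => UP ((x₀ - Δ * t) + (y₀ + Δ) * Y ω) := by
        funext ω; congr 1; ring
      simp only [hGdef]; rw [this]
    rw [he] at hc
    exact continuousOn_univ.mp (ConcaveOn.continuousOn isOpen_univ hc)
  -- upper bound forcing the integral below F₀ for large p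
  obtain ⟨w₀, hw₀⟩ : ∃ w₀ : ℝ, ∀ w ≤ w₀, UP w ≤ F₀ := by
    have := hlim.eventually (Filter.eventually_le_atBot F₀)
    rwa [Filter.eventually_atBot] at this
  have hub : ∀ Δ p : ℝ, 0 < Δ → G (x₀ - Δ * p) (y₀ + Δ) ≤ UP ((x₀ - Δ * p) + (y₀ + Δ) * C) := by
    intro Δ p hΔ
    have : G (x₀ - Δ * p) (y₀ + Δ) ≤ ∫ _ω, UP ((x₀ - Δ * p) + (y₀ + Δ) * C) ∂ℙ := by
      refine integral_mono (hInt _ _) (integrable_const _) fun ω => ?_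
      have h1 : Y ω ≤ C := (abs_le.mp (hbdd ω)).2
      exact hmono.monotone (by nlinarith)
    simpa using this
  -- existence of indifference price
  have hex : ∀ Δ : ℝ, 0 < Δ → ∃ p : ℝ, 0 ≤ p ∧ G (x₀ - Δ * p) (y₀ + Δ) = F₀ := by
    intro Δ hΔ
    set P : ℝ := max 0 ((x₀ + (y₀ + Δ) * C - w₀) / Δ) with hPdef
    have hP0 : 0 ≤ P := le_max_left _ _
    have hPbig : (x₀ + (y₀ + Δ) * C - w₀) / Δ ≤ P := le_max_right _ _
    have harg : (x₀ - Δ * P) + (y₀ + Δ) * C ≤ w₀ := by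
      rw [div_le_iff₀ hΔ] at hPbig; nlinarith
    have hP : G (x₀ - Δ * P) (y₀ + Δ) ≤ F₀ :=
      (hub Δ P hΔ).trans (hw₀ _ harg)
    have hmem : F₀ ∈ Set.Icc (G (x₀ - Δ * P) (y₀ + Δ)) (G (x₀ - Δ * 0) (y₀ + Δ)) := by
      constructor
      · exact hP
      · simpa using hφ0 Δ hΔ.le
    obtain ⟨p, hpmem, hpeq⟩ := intermediate_value_Icc' hP0 ((hcontp Δ).continuousOn) hmem
    exact ⟨p, hpmem.1, hpeq⟩
  set pS : ℝ → ℝ := fun Δ => if h : 0 < Δ then (hex Δ h).choose else 0 with hpSdef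
  have hpS : ∀ Δ : ℝ, (h : 0 < Δ) → 0 ≤ pS Δ ∧ G (x₀ - Δ * pS Δ) (y₀ + Δ) = F₀ := by
    intro Δ h
    simp only [hpSdef, dif_pos h]
    exact (hex Δ h).choose_spec
  refine ⟨pS, ?_, ?_, ?_, ?_⟩
  · intro Δ hΔ
    exact ⟨(hpS Δ hΔ).1, by rw [hG]; exact (hpS Δ hΔ).2⟩
  · intro Δ hΔ q _ hq
    rw [hG] at hq
    have := (hpS Δ hΔ).2
    exact (hanti Δ hΔ).injective (by rw [hq, this])
  · intro Δ₁ h₁ Δ₂ h₂ h12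
    rw [Set.mem_Ioi] at h₁ h₂
    rcases eq_or_lt_of_le h12 with rfl | hlt
    · exact le_refl _
    -- ψ : concavity along the Δ direction at price q = pS Δ₁
    set q : ℝ := pS Δ₁ with hq
    have hc := bc_concave ℙ UP hcont Y hmeas C hbdd hconc x₀ y₀ (-q) 1
    set ψ : ℝ → ℝ := fun t => ∫ ω, UP ((x₀ + t * (-q)) + (y₀ + t * 1) * Y ω) ∂ℙ with hψdef
    have hψ : ∀ t : ℝ, ψ t = G (x₀ - t * q) (y₀ + t) := by
      intro t
      have : (fun ω => UP ((x₀ + t * (-q)) + (y₀ + t * 1) * Y ω))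
          = fun ω => UP ((x₀ - t * q) + (y₀ + t) * Y ω) := by
        funext ω; congr 1; ring
      simp only [hψdef]; rw [this]
    have hψ0 : ψ 0 = F₀ := by
      rw [hψ]; simp only [zero_mul, mul_zero, sub_zero, add_zero]; exact hGF₀
    have hψ1 : ψ Δ₁ = F₀ := by rw [hψ]; exact (hpS Δ₁ h₁).2
    have ht1 : (0:ℝ) < Δ₁ / Δ₂ := div_pos h₁ (lt_trans h₁ hlt)
    have ht2 : Δ₁ / Δ₂ < 1 := (div_lt_one (lt_trans h₁ hlt)).mpr hlt
    have hcomb := hc.2 (Set.mem_univ (0:ℝ)) (Set.mem_univ Δ₂)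
      (by linarith : (0:ℝ) ≤ 1 - Δ₁ / Δ₂) ht1.le (by ring)
    have hpt : (1 - Δ₁ / Δ₂) • (0:ℝ) + (Δ₁ / Δ₂) • Δ₂ = Δ₁ := by
      rw [smul_eq_mul, smul_eq_mul, mul_zero, zero_add, div_mul_cancel₀ _ h₂.ne']
    rw [hpt] at hcomb
    have hψ2 : ψ Δ₂ ≤ F₀ := by
      have h := hcomb
      rw [hψ0, hψ1] at h
      simp only [smul_eq_mul] at h
      nlinarith [ht1, h]
    -- conclude pS Δ₂ ≤ q = pS Δ₁
    by_contra hcon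
    push_neg at hcon
    have h1 : G (x₀ - Δ₂ * pS Δ₂) (y₀ + Δ₂) < G (x₀ - Δ₂ * q) (y₀ + Δ₂) :=
      hanti Δ₂ (lt_trans h₁ hlt) hcon
    have h2 : G (x₀ - Δ₂ * q) (y₀ + Δ₂) ≤ F₀ := by
      have h := hψ2
      rw [hψ Δ₂] at h
      exact h
    rw [(hpS Δ₂ (lt_trans h₁ hlt)).2] at h1
    linarith
  · intro Δ hΔ
    rcases eq_or_lt_of_le hΔ with rfl | hΔ'
    · have : (fun ω => UP ((x₀ - 0 * pS 0) + (y₀ + 0) * Y ω))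
          = fun ω => UP (x₀ + y₀ * Y ω) := by
        funext ω; congr 1; ring
      rw [this]
    · exact (hpS Δ hΔ').2
end

section
/- Let U_P : ℝ → ℝ be concave, strictly increasing and continuous with U_P(w) → +∞ as w → +∞, and let Y be a bounded, almost surely nonnegative random variable. Fix x₀ ∈ ℝ and y₀ > 0. Then for every Δ with 0 < Δ ≤ y₀ there exists a unique price p^B(Δ) ≥ 0 satisfying the indifference condition E[U_P(x₀ + y₀·Y + Δ·(p^B(Δ) − Y))] = E[U_P(x₀ + y₀·Y)]; moreover the map Δ ↦ p^B(Δ) is monotone nondecreasing on (0, y₀]. Consequently, along the buy branch ψ_B = {(x₀ + Δ·p^B(Δ), y₀ − Δ) : 0 ≤ Δ ≤ y₀} of the bonding curve, the liquidity provider's expected utility over terminal wealth equals its initial value E[U_P(x₀ + y₀·Y)] at every point. -/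
open MeasureTheory

/-- buy branch of the optimally efficient bonding curve, Theorem 10:
for every trade size `Δ ∈ (0, y₀]` there is a unique nonnegative indifference price `p^B(Δ)`,
the map `Δ ↦ p^B(Δ)` is monotone nondecreasing on `(0, y₀]`, and along the buy branch
`ψ_B = {(x₀ + Δ·p^B(Δ), y₀ − Δ) : 0 ≤ Δ ≤ y₀}` the LP's expected utility over terminal
wealth equals its initial value at every point. -/
theorem optimally_efficient_bonding_curve_buy_branch
    {Ω : Type*} [MeasurableSpace Ω] (ℙ : Measure Ω) [IsProbabilityMeasure ℙ]
    (UP : ℝ → ℝ) (hconc : ConcaveOn ℝ Set.univ UP) (hmono : StrictMono UP)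
    (hcont : Continuous UP) (hlim : Filter.Tendsto UP Filter.atTop Filter.atTop)
    (Y : Ω → ℝ) (hmeas : Measurable Y) (C : ℝ) (hbdd : ∀ ω, |Y ω| ≤ C)
    (hpos : ∀ᵐ ω ∂ℙ, 0 ≤ Y ω)
    (x₀ y₀ : ℝ) (hy₀ : 0 < y₀) :
    ∃ pB : ℝ → ℝ,
      (∀ Δ : ℝ, 0 < Δ → Δ ≤ y₀ → 0 ≤ pB Δ ∧
        ∫ ω, UP (x₀ + y₀ * Y ω + Δ * (pB Δ - Y ω)) ∂ℙ =
          ∫ ω, UP (x₀ + y₀ * Y ω) ∂ℙ) ∧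
      (∀ Δ : ℝ, 0 < Δ → Δ ≤ y₀ → ∀ q : ℝ, 0 ≤ q →
        (∫ ω, UP (x₀ + y₀ * Y ω + Δ * (q - Y ω)) ∂ℙ =
          ∫ ω, UP (x₀ + y₀ * Y ω) ∂ℙ) → q = pB Δ) ∧
      MonotoneOn pB (Set.Ioc (0 : ℝ) y₀) ∧
      (∀ Δ : ℝ, 0 ≤ Δ → Δ ≤ y₀ →
        ∫ ω, UP ((x₀ + Δ * pB Δ) + (y₀ - Δ) * Y ω) ∂ℙ =
          ∫ ω, UP (x₀ + y₀ * Y ω) ∂ℙ) := by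
  classical
  have hm : Monotone UP := hmono.monotone
  -- basic integrability of `UP (a + b * Y ·)`
  have key : ∀ a b : ℝ, Integrable (fun ω => UP (a + b * Y ω)) ℙ := by
    intro a b
    refine ⟨(hcont.measurable.comp
      (measurable_const.add (measurable_const.mul hmeas))).aestronglyMeasurable, ?_⟩
    apply HasFiniteIntegral.of_bounded
      (C := max |UP (a - |b| * C)| |UP (a + |b| * C)|)
    filter_upwards with ω
    have hb : |b * Y ω| ≤ |b| * C := by
      rw [abs_mul]; exact mul_le_mul_of_nonneg_left (hbdd ω) (abs_nonneg b)
    have h1 : UP (a - |b| * C) ≤ UP (a + b * Y ω) := by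
      apply hm; have := neg_abs_le (b * Y ω); linarith
    have h2 : UP (a + b * Y ω) ≤ UP (a + |b| * C) := by
      apply hm; have := le_abs_self (b * Y ω); linarith
    rw [Real.norm_eq_abs, abs_le]
    constructor
    · have := neg_abs_le (UP (a - |b| * C))
      have h3 : |UP (a - |b| * C)| ≤ max |UP (a - |b| * C)| |UP (a + |b| * C)| :=
        le_max_left _ _
      linarith
    · have := le_abs_self (UP (a + |b| * C))
      have h3 : |UP (a + |b| * C)| ≤ max |UP (a - |b| * C)| |UP (a + |b| * C)| :=
        le_max_right _ _
      linarith
  -- the integrands appearing have the above shape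
  have hfe : ∀ Δ p : ℝ, (fun ω => UP (x₀ + y₀ * Y ω + Δ * (p - Y ω)))
      = fun ω => UP ((x₀ + Δ * p) + (y₀ - Δ) * Y ω) := by
    intro Δ p; funext ω; congr 1; ring
  have hint : ∀ Δ p : ℝ, Integrable (fun ω => UP (x₀ + y₀ * Y ω + Δ * (p - Y ω))) ℙ := by
    intro Δ p; rw [hfe]; exact key _ _
  have hint0 : Integrable (fun ω => UP (x₀ + y₀ * Y ω)) ℙ := key x₀ y₀
  set g : ℝ → ℝ → ℝ := fun Δ p => ∫ ω, UP (x₀ + y₀ * Y ω + Δ * (p - Y ω)) ∂ℙ with hg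
  set g₀ : ℝ := ∫ ω, UP (x₀ + y₀ * Y ω) ∂ℙ with hg₀
  -- strict monotonicity of `g Δ` in the price, for `Δ > 0`
  have hsm : ∀ Δ : ℝ, 0 < Δ → StrictMono (g Δ) := by
    intro Δ hΔ p₁ p₂ hp
    have hlt : ∀ ω, UP (x₀ + y₀ * Y ω + Δ * (p₁ - Y ω))
        < UP (x₀ + y₀ * Y ω + Δ * (p₂ - Y ω)) := by
      intro ω; apply hmono; nlinarith
    have hintd : Integrable (fun ω => UP (x₀ + y₀ * Y ω + Δ * (p₂ - Y ω))
        - UP (x₀ + y₀ * Y ω + Δ * (p₁ - Y ω))) ℙ := (hint Δ p₂).sub (hint Δ p₁)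
    have hposint : 0 < ∫ ω, (UP (x₀ + y₀ * Y ω + Δ * (p₂ - Y ω))
        - UP (x₀ + y₀ * Y ω + Δ * (p₁ - Y ω))) ∂ℙ := by
      rw [integral_pos_iff_support_of_nonneg_ae
        (Filter.Eventually.of_forall fun ω => by have := hlt ω; simp; linarith) hintd]
      have hsupp : (Function.support fun ω => UP (x₀ + y₀ * Y ω + Δ * (p₂ - Y ω))
          - UP (x₀ + y₀ * Y ω + Δ * (p₁ - Y ω))) = Set.univ := by
        ext ω; simp [Function.mem_support, sub_ne_zero]
        exact (hlt ω).ne'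
      rw [hsupp]; simp
    have := integral_sub (hint Δ p₂) (hint Δ p₁)
    simp only [hg]
    rw [this] at hposint
    linarith
  -- concavity of `t ↦ ∫ UP ((a₁ + t b₁) + (a₂ + t b₂) Y)`
  have hconc2 : ∀ a₁ b₁ a₂ b₂ : ℝ, ConcaveOn ℝ Set.univ
      (fun t => ∫ ω, UP ((a₁ + t * b₁) + (a₂ + t * b₂) * Y ω) ∂ℙ) := by
    intro a₁ b₁ a₂ b₂
    refine ⟨convex_univ, ?_⟩
    intro s _ t _ θ τ hθ hτ hθτ
    simp only [smul_eq_mul]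
    have hpt : ∀ ω, θ * UP ((a₁ + s * b₁) + (a₂ + s * b₂) * Y ω)
        + τ * UP ((a₁ + t * b₁) + (a₂ + t * b₂) * Y ω)
        ≤ UP ((a₁ + (θ * s + τ * t) * b₁) + (a₂ + (θ * s + τ * t) * b₂) * Y ω) := by
      intro ω
      have harg : (a₁ + (θ * s + τ * t) * b₁) + (a₂ + (θ * s + τ * t) * b₂) * Y ω
          = θ * ((a₁ + s * b₁) + (a₂ + s * b₂) * Y ω)
            + τ * ((a₁ + t * b₁) + (a₂ + t * b₂) * Y ω) := by
        have : θ = 1 - τ := by linarith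
        subst this; ring
      rw [harg]
      have := hconc.2 (Set.mem_univ ((a₁ + s * b₁) + (a₂ + s * b₂) * Y ω))
        (Set.mem_univ ((a₁ + t * b₁) + (a₂ + t * b₂) * Y ω)) hθ hτ hθτ
      simpa [smul_eq_mul] using this
    calc θ * ∫ ω, UP ((a₁ + s * b₁) + (a₂ + s * b₂) * Y ω) ∂ℙ
          + τ * ∫ ω, UP ((a₁ + t * b₁) + (a₂ + t * b₂) * Y ω) ∂ℙ
        = ∫ ω, (θ * UP ((a₁ + s * b₁) + (a₂ + s * b₂) * Y ω)
            + τ * UP ((a₁ + t * b₁) + (a₂ + t * b₂) * Y ω)) ∂ℙ := by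
          rw [integral_add ((key _ _).const_mul θ) ((key _ _).const_mul τ),
            integral_const_mul, integral_const_mul]
      _ ≤ _ := integral_mono (((key _ _).const_mul θ).add ((key _ _).const_mul τ))
          (key _ _) hpt
  -- continuity of `g Δ` in the price
  have hcontg : ∀ Δ : ℝ, Continuous (g Δ) := by
    intro Δ
    have h1 : g Δ = fun p => ∫ ω, UP ((x₀ + p * Δ) + ((y₀ - Δ) + p * 0) * Y ω) ∂ℙ := by
      funext p
      simp only [hg]
      rw [hfe]
      congr 1; funext ω; congr 2 <;> ring
    rw [h1]
    have := (hconc2 x₀ Δ (y₀ - Δ) 0).continuousOn isOpen_univ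
    rw [continuousOn_univ] at this
    exact this
  -- `g Δ 0 ≤ g₀` for `0 ≤ Δ`
  have hlow : ∀ Δ : ℝ, 0 ≤ Δ → g Δ 0 ≤ g₀ := by
    intro Δ hΔ
    apply integral_mono_ae (hint Δ 0) hint0
    filter_upwards [hpos] with ω hω
    apply hm; nlinarith
  -- for large prices `g Δ` exceeds `g₀`
  have hhigh : ∀ Δ : ℝ, 0 < Δ → ∃ P : ℝ, 0 ≤ P ∧ g₀ ≤ g Δ P := by
    intro Δ hΔ
    obtain ⟨M, hM⟩ := (Filter.tendsto_atTop.1 hlim g₀).exists_forall_of_atTop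
    refine ⟨max 0 ((M - x₀) / Δ + C), le_max_left _ _, ?_⟩
    set P := max 0 ((M - x₀) / Δ + C) with hP
    have : g₀ = ∫ _ω, g₀ ∂ℙ := by simp
    rw [this]
    apply integral_mono_ae (integrable_const _) (hint Δ P)
    filter_upwards [hpos] with ω hω
    apply hM
    have hPC : (M - x₀) / Δ + C ≤ P := le_max_right _ _
    have hYC : Y ω ≤ C := le_trans (le_abs_self _) (hbdd ω)
    have h2 : M - x₀ ≤ Δ * (P - C) := by
      have hdiv : (M - x₀) / Δ ≤ P - C := by linarith
      have := (div_le_iff₀ hΔ).mp hdiv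
      linarith
    nlinarith
  -- existence of the indifference price
  have hex : ∀ Δ : ℝ, 0 < Δ → ∃ p : ℝ, 0 ≤ p ∧ g Δ p = g₀ := by
    intro Δ hΔ
    obtain ⟨P, hP0, hPg⟩ := hhigh Δ hΔ
    have hivt := intermediate_value_Icc hP0 ((hcontg Δ).continuousOn)
    have : g₀ ∈ Set.Icc (g Δ 0) (g Δ P) := ⟨hlow Δ hΔ.le, hPg⟩
    obtain ⟨p, hp, hpg⟩ := hivt this
    exact ⟨p, hp.1, hpg⟩
  choose pfun hp0 hpg using fun (Δ : ℝ) (h : 0 < Δ) => hex Δ h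
  set pB : ℝ → ℝ := fun Δ => if h : 0 < Δ then pfun Δ h else 0 with hpB
  have hpBval : ∀ Δ : ℝ, (h : 0 < Δ) → pB Δ = pfun Δ h := by
    intro Δ h; simp [hpB, h]
  have hpBnn : ∀ Δ : ℝ, 0 < Δ → 0 ≤ pB Δ := by
    intro Δ h; rw [hpBval Δ h]; exact hp0 Δ h
  have hpBg : ∀ Δ : ℝ, 0 < Δ → g Δ (pB Δ) = g₀ := by
    intro Δ h; rw [hpBval Δ h]; exact hpg Δ h
  refine ⟨pB, ?_, ?_, ?_, ?_⟩
  · intro Δ hΔ _; exact ⟨hpBnn Δ hΔ, hpBg Δ hΔ⟩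
  · intro Δ hΔ _ q _ hq
    apply (hsm Δ hΔ).injective
    rw [hpBg Δ hΔ]
    simpa [hg, hg₀] using hq
  · -- monotonicity
    intro Δ₁ h₁ Δ₂ h₂ h12
    rcases eq_or_lt_of_le h12 with rfl | hlt
    · exact le_refl _
    by_contra hcon
    push_neg at hcon
    -- key step: `g Δ₂ (pB Δ₁) ≤ g₀` via concavity in the trade size
    have hkey : g Δ₂ (pB Δ₁) ≤ g₀ := by
      set p₁ := pB Δ₁ with hp₁
      have hφ : ∀ t : ℝ, g t p₁ = (fun t => ∫ ω, UP ((x₀ + t * p₁)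
          + (y₀ + t * (-1)) * Y ω) ∂ℙ) t := by
        intro t
        simp only [hg]
        rw [hfe]
        congr 1; funext ω; congr 2 <;> ring
      have hφc := hconc2 x₀ p₁ y₀ (-1)
      set φ : ℝ → ℝ := fun t => ∫ ω, UP ((x₀ + t * p₁) + (y₀ + t * (-1)) * Y ω) ∂ℙ
      have hφ0 : φ 0 = g₀ := by
        rw [← hφ 0]
        simp only [hg, hg₀]
        congr 1; funext ω; congr 1; ring
      have hφ1 : φ Δ₁ = g₀ := by rw [← hφ Δ₁]; exact hpBg Δ₁ h₁.1
      -- concavity: Δ₁ = θ·0 + τ·Δ₂ with τ = Δ₁/Δ₂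
      have hΔ₂ : (0:ℝ) < Δ₂ := h₂.1
      set τ : ℝ := Δ₁ / Δ₂ with hτ
      have hτpos : 0 < τ := div_pos h₁.1 hΔ₂
      have hτle : τ ≤ 1 := by
        rw [hτ, div_le_one hΔ₂]; exact h12
      have hcomb : (1 - τ) • (0:ℝ) + τ • Δ₂ = Δ₁ := by
        simp [smul_eq_mul, hτ]; field_simp
      have := hφc.2 (Set.mem_univ (0:ℝ)) (Set.mem_univ Δ₂)
        (by linarith : (0:ℝ) ≤ 1 - τ) hτpos.le (by ring)
      rw [hcomb] at this
      rw [hφ0, hφ1] at this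
      simp only [smul_eq_mul] at this
      have hφΔ₂ : φ Δ₂ ≤ g₀ := by nlinarith
      rw [← hφ Δ₂] at hφΔ₂
      exact hφΔ₂
    have := hsm Δ₂ h₂.1 hcon
    rw [hpBg Δ₂ h₂.1] at this
    linarith
  · -- buy branch
    intro Δ hΔ0 hΔy
    rcases eq_or_lt_of_le hΔ0 with rfl | hΔ
    · simp [hg₀]
    · have := hpBg Δ hΔ
      simp only [hg, hg₀] at this
      rw [hfe] at this
      exact this
end
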